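/- For every prime p, the subgroup Γ₀(p) has index p³ + p² + p + 1 in Sp₄(ℤ). -/

import Mathlib

open Matrix

/-- The standard symplectic form matrix `J = [[0, I₂], [-I₂, 0]]` in `2 × 2` blocks. -/
def Jmat : Matrix (Fin 2 ⊕ Fin 2) (Fin 2 ⊕ Fin 2) ℤ :=
  Matrix.fromBlocks 0 1 (-1) 0

/-- The symplectic group `Sp₄(ℤ)`: integer matrices satisfying `ᵗγ ⬝ J ⬝ γ = J`,
as a subgroup of the general linear group. -/
def Sp4 : Subgroup (Matrix.GeneralLinearGroup (Fin 2 ⊕ Fin 2) ℤ) where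
  carrier := {γ | ((γ : Matrix (Fin 2 ⊕ Fin 2) (Fin 2 ⊕ Fin 2) ℤ))ᵀ * Jmat *
      ((γ : Matrix (Fin 2 ⊕ Fin 2) (Fin 2 ⊕ Fin 2) ℤ)) = Jmat}
  one_mem' := by simp
  mul_mem' := by
    intro a b ha hb
    simp only [Set.mem_setOf_eq, Units.val_mul, Matrix.transpose_mul] at *
    calc (↑b)ᵀ * (↑a)ᵀ * Jmat * ((a : Matrix (Fin 2 ⊕ Fin 2) (Fin 2 ⊕ Fin 2) ℤ) * ↑b)
        = (↑b)ᵀ * ((↑a)ᵀ * Jmat * ↑a) * ↑b := by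
          simp only [Matrix.mul_assoc]
      _ = Jmat := by rw [ha, hb]
  inv_mem' := by
    intro a ha
    simp only [Set.mem_setOf_eq] at *
    have h1 : (a : Matrix (Fin 2 ⊕ Fin 2) (Fin 2 ⊕ Fin 2) ℤ) *
        (↑(a⁻¹) : Matrix (Fin 2 ⊕ Fin 2) (Fin 2 ⊕ Fin 2) ℤ) = 1 := by
      rw [← Units.val_mul, mul_inv_cancel, Units.val_one]
    calc (↑(a⁻¹) : Matrix (Fin 2 ⊕ Fin 2) (Fin 2 ⊕ Fin 2) ℤ)ᵀ * Jmat *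
          (↑(a⁻¹) : Matrix (Fin 2 ⊕ Fin 2) (Fin 2 ⊕ Fin 2) ℤ)
        = (↑(a⁻¹) : Matrix (Fin 2 ⊕ Fin 2) (Fin 2 ⊕ Fin 2) ℤ)ᵀ *
            ((↑a)ᵀ * Jmat * ↑a) * ↑(a⁻¹) := by rw [ha]
      _ = ((a : Matrix (Fin 2 ⊕ Fin 2) (Fin 2 ⊕ Fin 2) ℤ) *
            (↑(a⁻¹) : Matrix (Fin 2 ⊕ Fin 2) (Fin 2 ⊕ Fin 2) ℤ))ᵀ * Jmat *
            ((a : Matrix (Fin 2 ⊕ Fin 2) (Fin 2 ⊕ Fin 2) ℤ) *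
            (↑(a⁻¹) : Matrix (Fin 2 ⊕ Fin 2) (Fin 2 ⊕ Fin 2) ℤ)) := by
          rw [Matrix.transpose_mul]
          simp only [Matrix.mul_assoc]
      _ = Jmat := by rw [h1]; simp

/-- The underlying integer matrix of an element of `Sp₄(ℤ)`. -/
def matOf (γ : ↥Sp4) : Matrix (Fin 2 ⊕ Fin 2) (Fin 2 ⊕ Fin 2) ℤ :=
  ((γ : Matrix.GeneralLinearGroup (Fin 2 ⊕ Fin 2) ℤ) :
    Matrix (Fin 2 ⊕ Fin 2) (Fin 2 ⊕ Fin 2) ℤ)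

/-- The inverse of a symplectic matrix is `-J ⬝ ᵗM ⬝ J`. -/
theorem matOf_inv (a : ↥Sp4) : matOf a⁻¹ = -Jmat * (matOf a)ᵀ * Jmat := by
  have hJJ : Jmat * Jmat = -1 := by
    simp only [Jmat, Matrix.fromBlocks_multiply]
    rw [show (-1 : Matrix (Fin 2 ⊕ Fin 2) (Fin 2 ⊕ Fin 2) ℤ) = -fromBlocks 1 0 0 1 by
      rw [Matrix.fromBlocks_one], Matrix.fromBlocks_neg]
    norm_num
  have hsymp : (matOf a)ᵀ * Jmat * matOf a = Jmat := a.2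
  have h : (-Jmat * (matOf a)ᵀ * Jmat) * matOf a = 1 := by
    calc (-Jmat * (matOf a)ᵀ * Jmat) * matOf a
        = -(Jmat * ((matOf a)ᵀ * Jmat * matOf a)) := by
          simp [Matrix.mul_assoc]
      _ = -(Jmat * Jmat) := by rw [hsymp]
      _ = 1 := by rw [hJJ]; simp
  have h2 := Units.inv_eq_of_mul_eq_one_left
    (u := (a : Matrix.GeneralLinearGroup (Fin 2 ⊕ Fin 2) ℤ)) h
  have h3 : matOf a⁻¹ =
      ↑((a : Matrix.GeneralLinearGroup (Fin 2 ⊕ Fin 2) ℤ))⁻¹ := by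
    simp [matOf]
  rw [h3, h2]

/-- The congruence subgroup `Γ₀(p) ⊆ Sp₄(ℤ)`: matrices whose lower-left `2 × 2` block
is `≡ 0 mod p`. -/
def Gamma0 (p : ℕ) : Subgroup ↥Sp4 where
  carrier := {γ | ∀ i j : Fin 2, (p : ℤ) ∣ matOf γ (Sum.inr i) (Sum.inl j)}
  one_mem' := by
    intro i j
    simp [matOf, Matrix.one_apply]
  mul_mem' := by
    intro a b ha hb i j
    have hab : matOf (a * b) = matOf a * matOf b := rfl
    rw [hab, Matrix.mul_apply, Fintype.sum_sum_type]
    exact dvd_add (Finset.dvd_sum fun k _ => (ha i k).mul_right _)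
      (Finset.dvd_sum fun k _ => (hb k j).mul_left _)
  inv_mem' := by
    intro a ha i j
    rw [matOf_inv]
    have hentry : (-Jmat * (matOf a)ᵀ * Jmat) (Sum.inr i) (Sum.inl j) =
        -matOf a (Sum.inr j) (Sum.inl i) := by
      simp [Jmat, Matrix.mul_apply, Fintype.sum_sum_type, Matrix.fromBlocks,
        Matrix.one_apply, Finset.sum_ite_eq, Finset.mul_sum]
    rw [hentry]
    exact (ha j i).neg_right

/-!
Reduction mod `p` sends the coset `γ Γ₀(p)` to the plane spanned by the first two columns of
`γ mod p`, a Lagrangian plane of `𝔽_p⁴`, and `γ⁻¹ δ ∈ Γ₀(p)` exactly when `γ` and `δ` give the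
same plane. Every Lagrangian plane has a unique column-reduced frame in one of four Schubert
cells, of sizes `p³`, `p²`, `p` and `1`, and each of these frames is the reduction of the first
two columns of an explicit integral symplectic matrix. So the cosets are counted by the normal
forms.
-/

section Symplectic
variable {R : Type*} [CommRing R] {m n : Type*} [Fintype m] [DecidableEq m]

theorem transpose_fromRows_mul_fromBlocks_mul_fromRows (A C : Matrix m n R) :
    (fromRows A C)ᵀ * (fromBlocks 0 1 (-1) 0 : Matrix (m ⊕ m) (m ⊕ m) R) * fromRows A C =
      Aᵀ * C - Cᵀ * A := by
  simp [transpose_fromRows, fromCols_mul_fromBlocks, fromCols_mul_fromRows, sub_eq_neg_add]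

end Symplectic

abbrev LagrangianIndex (R : Type*) := (R × R × R) ⊕ (R × R) ⊕ R ⊕ Unit

section NormalForm
variable {R : Type*} [CommRing R]

/-- Column-reduced frames of the Lagrangian planes in `R⁴`, one family per Schubert cell: the
upper block has rank 2, rank 1 with image `≠ ⟨e₁⟩`, rank 1 with image `⟨e₁⟩`, or rank 0. -/
def lagrangianNormalForm : LagrangianIndex R → Matrix (Fin 2 ⊕ Fin 2) (Fin 2) R
  | .inl (a, b, c) => fromRows 1 !![a, b; b, c]
  | .inr (.inl (l, t)) => fromRows !![0, -l; 0, 1] !![1, 0; l, t]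
  | .inr (.inr (.inl t)) => fromRows !![0, 1; 0, 0] !![0, t; 1, 0]
  | .inr (.inr (.inr _)) => fromRows 0 1

theorem eq_of_lagrangianNormalForm_eq_mul [Nontrivial R] {i j : LagrangianIndex R}
    {g : Matrix (Fin 2) (Fin 2) R}
    (h : lagrangianNormalForm j = lagrangianNormalForm i * g) : i = j := by
  obtain ⟨x, y, z, w, rfl⟩ : ∃ x y z w, g = !![x, y; z, w] := ⟨_, _, _, _, eta_fin_two g⟩
  rcases i with ⟨a, b, c⟩ | ⟨l, t⟩ | t | u <;> rcases j with ⟨a', b', c'⟩ | ⟨l', t'⟩ | t' | u' <;>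
    simp [lagrangianNormalForm, fromRows_mul, fromRows_inj.eq_iff, one_fin_two, ← Matrix.ext_iff,
      Fin.forall_fin_two] at h ⊢ <;>
    grind [zero_ne_one]

end NormalForm

theorem mul_fin_two_cols {R : Type*} [Semiring R] (M : Matrix (Fin 2) (Fin 2) R)
    (v w : Fin 2 → R) :
    M * !![v 0, w 0; v 1, w 1] = !![(M *ᵥ v) 0, (M *ᵥ w) 0; (M *ᵥ v) 1, (M *ᵥ w) 1] := by
  ext i j
  fin_cases i <;> fin_cases j <;> simp [mul_apply, mulVec, dotProduct, Fin.sum_univ_two]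

section Field
variable {K : Type*} [Field K]

theorem exists_mul_eq_lagrangianNormalForm_of_isUnit_det {A C : Matrix (Fin 2) (Fin 2) K}
    (hsym : Aᵀ * C = Cᵀ * A) (hA : IsUnit A.det) :
    ∃ (i : LagrangianIndex K) (G : Matrix (Fin 2) (Fin 2) K),
      fromRows A C * G = lagrangianNormalForm i := by
  obtain ⟨S, hS⟩ : ∃ S, S = C * A⁻¹ := ⟨_, rfl⟩
  have hAS : Aᵀ * S = Cᵀ := by
    rw [hS, ← Matrix.mul_assoc, hsym, Matrix.mul_assoc, mul_nonsing_inv A hA, Matrix.mul_one]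
  have hSt : Sᵀ = S := calc
    Sᵀ = Sᵀ * A * A⁻¹ := by rw [Matrix.mul_assoc, mul_nonsing_inv A hA, Matrix.mul_one]
    _ = (Aᵀ * S)ᵀ * A⁻¹ := by rw [transpose_mul, transpose_transpose]
    _ = S := by rw [hAS, transpose_transpose, hS]
  have hsymm : S 1 0 = S 0 1 := congrFun (congrFun hSt 0) 1
  refine ⟨.inl (S 0 0, S 0 1, S 1 1), A⁻¹, ?_⟩
  rw [fromRows_mul, mul_nonsing_inv A hA, lagrangianNormalForm, ← hS]
  congr 1
  conv_lhs => rw [eta_fin_two S, hsymm]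

theorem exists_mul_eq_lagrangianNormalForm_of_rank_one {α κ β : Fin 2 → K} (hα : α ≠ 0)
    (hκ : κ ≠ 0) (horth : κ ⬝ᵥ α = 0) :
    ∃ (i : LagrangianIndex K) (G : Matrix (Fin 2) (Fin 2) K),
      fromRows !![0, α 0; 0, α 1] !![κ 0, β 0; κ 1, β 1] * G = lagrangianNormalForm i := by
  rw [dotProduct, Fin.sum_univ_two] at horth
  by_cases hα₁ : α 1 = 0
  · have hα₀ : α 0 ≠ 0 := fun h => hα (funext (Fin.forall_fin_two.2 ⟨h, hα₁⟩))
    have hκ₀ : κ 0 = 0 := by simpa [hα₁, hα₀] using horth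
    have hκ₁ : κ 1 ≠ 0 := fun h => hκ (funext (Fin.forall_fin_two.2 ⟨hκ₀, h⟩))
    refine ⟨.inr (.inr (.inl (β 0 / α 0))), !![(κ 1)⁻¹, -β 1 / (κ 1 * α 0); 0, (α 0)⁻¹], ?_⟩
    rw [lagrangianNormalForm, fromRows_mul, mul_fin_two, mul_fin_two]
    congr 1 <;> ext i j <;> fin_cases i <;> fin_cases j <;> field_simp <;> grind
  · have hκ₀ : κ 0 ≠ 0 := fun h => hκ (funext (Fin.forall_fin_two.2 ⟨h, by simp_all⟩))
    refine ⟨.inr (.inl (-α 0 / α 1, (κ 0 * β 1 - κ 1 * β 0) / (κ 0 * α 1))),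
      !![(κ 0)⁻¹, -β 0 / (κ 0 * α 1); 0, (α 1)⁻¹], ?_⟩
    rw [lagrangianNormalForm, fromRows_mul, mul_fin_two, mul_fin_two]
    congr 1 <;> ext i j <;> fin_cases i <;> fin_cases j <;> field_simp <;> grind

theorem exists_mul_eq_lagrangianNormalForm_of_blocks {A C : Matrix (Fin 2) (Fin 2) K}
    (hsym : Aᵀ * C = Cᵀ * A) (hinj : Function.Injective (fromRows A C).mulVec) :
    ∃ (i : LagrangianIndex K) (G : Matrix (Fin 2) (Fin 2) K),
      fromRows A C * G = lagrangianNormalForm i := by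
  have hker : ∀ v, A *ᵥ v = 0 → C *ᵥ v = 0 → v = 0 := fun v hAv hCv =>
    hinj (by simp [fromRows_mulVec, hAv, hCv])
  by_cases hA : IsUnit A.det
  · exact exists_mul_eq_lagrangianNormalForm_of_isUnit_det hsym hA
  by_cases hA0 : A = 0
  · subst hA0
    have hC : IsUnit C.det := by
      by_contra hC
      obtain ⟨v, hv, hCv⟩ :=
        exists_mulVec_eq_zero_iff.mpr (by simpa [isUnit_iff_ne_zero] using hC)
      exact hv (hker v (zero_mulVec v) hCv)
    exact ⟨.inr (.inr (.inr ())), C⁻¹, by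
      rw [fromRows_mul, Matrix.zero_mul, mul_nonsing_inv C hC, lagrangianNormalForm]⟩
  obtain ⟨v, hv, hAv⟩ := exists_mulVec_eq_zero_iff.mpr (by simpa [isUnit_iff_ne_zero] using hA)
  obtain ⟨w, hAw⟩ := Function.ne_iff.mp (mulVec_injective.ne hA0)
  rw [zero_mulVec] at hAw
  -- `(Cv)·(Aw) = v·(CᵀA)w = v·(AᵀC)w = (Av)·(Cw) = 0`
  have horth : C *ᵥ v ⬝ᵥ A *ᵥ w = 0 := by
    rw [← vecMul_transpose, ← dotProduct_mulVec, mulVec_mulVec, ← hsym, ← mulVec_mulVec,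
      dotProduct_mulVec, vecMul_transpose, hAv, zero_dotProduct]
  obtain ⟨i, G, hG⟩ := exists_mul_eq_lagrangianNormalForm_of_rank_one (β := C *ᵥ w) hAw
    (fun h => hv (hker v hAv h)) horth
  refine ⟨i, !![v 0, w 0; v 1, w 1] * G, ?_⟩
  rw [← hG, ← Matrix.mul_assoc, fromRows_mul, mul_fin_two_cols, mul_fin_two_cols, hAv]
  rfl

theorem exists_mul_eq_lagrangianNormalForm {P : Matrix (Fin 2 ⊕ Fin 2) (Fin 2) K}
    (hP : Pᵀ * (fromBlocks 0 1 (-1) 0 : Matrix (Fin 2 ⊕ Fin 2) (Fin 2 ⊕ Fin 2) K) * P = 0)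
    (hinj : Function.Injective P.mulVec) :
    ∃ (i : LagrangianIndex K) (G : Matrix (Fin 2) (Fin 2) K), P * G = lagrangianNormalForm i := by
  rw [← fromRows_toRows P, transpose_fromRows_mul_fromBlocks_mul_fromRows, sub_eq_zero] at hP
  rw [← fromRows_toRows P] at hinj ⊢
  exact exists_mul_eq_lagrangianNormalForm_of_blocks hP hinj

end Field

theorem Jmat_mul_Jmat : Jmat * Jmat = -1 := by
  simp [Jmat, fromBlocks_multiply, ← fromBlocks_one, fromBlocks_neg]

theorem Jmat_map {S : Type*} [Ring S] : Jmat.map (Int.cast : ℤ → S) = fromBlocks 0 1 (-1) 0 := by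
  simp [Jmat, fromBlocks_map, Matrix.map_neg, Matrix.map_one]

def Sp4.ofMatrix (M : Matrix (Fin 2 ⊕ Fin 2) (Fin 2 ⊕ Fin 2) ℤ) (hM : Mᵀ * Jmat * M = Jmat) :
    ↥Sp4 :=
  have hinv : (-Jmat * Mᵀ * Jmat) * M = 1 := calc
    (-Jmat * Mᵀ * Jmat) * M = -(Jmat * (Mᵀ * Jmat * M)) := by
      simp only [Matrix.neg_mul, Matrix.mul_assoc]
    _ = 1 := by rw [hM, Jmat_mul_Jmat, neg_neg]
  ⟨⟨M, -Jmat * Mᵀ * Jmat, mul_eq_one_comm.mp hinv, hinv⟩, hM⟩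

theorem matOf_ofMatrix (M : Matrix (Fin 2 ⊕ Fin 2) (Fin 2 ⊕ Fin 2) ℤ)
    (hM : Mᵀ * Jmat * M = Jmat) :
    matOf (Sp4.ofMatrix M hM) = M := rfl

def standardFrame (R : Type*) [Semiring R] : Matrix (Fin 2 ⊕ Fin 2) (Fin 2) R := fromRows 1 0

theorem standardFrame_mul {R : Type*} [Semiring R] (g : Matrix (Fin 2) (Fin 2) R) :
    standardFrame R * g = fromRows g 0 := by
  rw [standardFrame, fromRows_mul, Matrix.one_mul, Matrix.zero_mul]

section Reduction
variable (p : ℕ)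

def reduceMod : ↥Sp4 →* GL (Fin 2 ⊕ Fin 2) (ZMod p) :=
  (GeneralLinearGroup.map (Int.castRingHom (ZMod p))).comp Sp4.subtype

def firstColumnsMod (γ : ↥Sp4) : Matrix (Fin 2 ⊕ Fin 2) (Fin 2) (ZMod p) :=
  (reduceMod p γ : Matrix (Fin 2 ⊕ Fin 2) (Fin 2 ⊕ Fin 2) (ZMod p)) * standardFrame (ZMod p)

theorem firstColumnsMod_apply (γ : ↥Sp4) (i : Fin 2 ⊕ Fin 2) (j : Fin 2) :
    firstColumnsMod p γ i j = matOf γ i (.inl j) := by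
  simp [firstColumnsMod, standardFrame, reduceMod, matOf, mul_apply, Fintype.sum_sum_type,
    one_apply]

theorem firstColumnsMod_mul (γ δ : ↥Sp4) :
    firstColumnsMod p (γ * δ) =
      (reduceMod p γ : Matrix (Fin 2 ⊕ Fin 2) (Fin 2 ⊕ Fin 2) (ZMod p)) * firstColumnsMod p δ := by
  rw [firstColumnsMod, firstColumnsMod, map_mul, Units.val_mul, Matrix.mul_assoc]

theorem mem_Gamma0_iff_toRows₂_firstColumnsMod (γ : ↥Sp4) :
    γ ∈ Gamma0 p ↔ (firstColumnsMod p γ).toRows₂ = 0 := by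
  simp [Gamma0, ← Matrix.ext_iff, firstColumnsMod_apply, ZMod.intCast_zmod_eq_zero_iff_dvd]

theorem inv_mul_mem_Gamma0_iff (γ δ : ↥Sp4) :
    γ⁻¹ * δ ∈ Gamma0 p ↔
      ∃ g : Matrix (Fin 2) (Fin 2) (ZMod p), firstColumnsMod p δ = firstColumnsMod p γ * g := by
  set R := (reduceMod p γ : Matrix (Fin 2 ⊕ Fin 2) (Fin 2 ⊕ Fin 2) (ZMod p))
  set R' := (reduceMod p γ⁻¹ : Matrix (Fin 2 ⊕ Fin 2) (Fin 2 ⊕ Fin 2) (ZMod p))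
  have hR'R : R' * R = 1 := by
    rw [← Units.val_mul, ← map_mul, inv_mul_cancel, map_one, Units.val_one]
  have hRR' : R * R' = 1 := by
    rw [← Units.val_mul, ← map_mul, mul_inv_cancel, map_one, Units.val_one]
  have hFγ : firstColumnsMod p γ = R * standardFrame (ZMod p) := rfl
  rw [mem_Gamma0_iff_toRows₂_firstColumnsMod, firstColumnsMod_mul, hFγ]
  constructor
  · intro h
    refine ⟨(R' * firstColumnsMod p δ).toRows₁, ?_⟩
    rw [Matrix.mul_assoc, standardFrame_mul, ← h, fromRows_toRows, ← Matrix.mul_assoc, hRR',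
      Matrix.one_mul]
  · rintro ⟨g, hg⟩
    rw [hg, ← Matrix.mul_assoc, ← Matrix.mul_assoc, hR'R, Matrix.one_mul, standardFrame_mul,
      toRows₂_fromRows]

theorem firstColumnsMod_isotropic (γ : ↥Sp4) :
    (firstColumnsMod p γ)ᵀ *
      (fromBlocks 0 1 (-1) 0 : Matrix (Fin 2 ⊕ Fin 2) (Fin 2 ⊕ Fin 2) (ZMod p)) *
      firstColumnsMod p γ = 0 := by
  set R := (reduceMod p γ : Matrix (Fin 2 ⊕ Fin 2) (Fin 2 ⊕ Fin 2) (ZMod p))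
  have hR : Rᵀ * fromBlocks 0 1 (-1) 0 * R = fromBlocks 0 1 (-1) 0 := by
    have h := congrArg (Matrix.map · (Int.castRingHom (ZMod p))) γ.2
    rwa [Matrix.map_mul, Matrix.map_mul, transpose_map, Int.coe_castRingHom, Jmat_map] at h
  calc _ = (standardFrame (ZMod p))ᵀ * (Rᵀ * fromBlocks 0 1 (-1) 0 * R) *
        standardFrame (ZMod p) := by
        simp only [firstColumnsMod, transpose_mul, Matrix.mul_assoc]
        rfl
    _ = 0 := by
        rw [hR, standardFrame, transpose_fromRows_mul_fromBlocks_mul_fromRows]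
        simp

end Reduction

section CosetRepresentatives
variable (p : ℕ)

def cosetRepMatrix : LagrangianIndex (ZMod p) → Matrix (Fin 2 ⊕ Fin 2) (Fin 2 ⊕ Fin 2) ℤ
  | .inl (a, b, c) => fromBlocks 1 0 !![(a.val : ℤ), b.val; b.val, c.val] 1
  | .inr (.inl (l, t)) =>
      fromBlocks !![0, -(l.val : ℤ); 0, 1] !![-1, 0; 0, 0]
        !![1, 0; (l.val : ℤ), t.val] !![0, 0; 0, 1]
  | .inr (.inr (.inl t)) =>
      fromBlocks !![0, 1; 0, 0] !![0, 0; -1, 0] !![0, (t.val : ℤ); 1, 0] !![0, 1; 0, 0]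
  | .inr (.inr (.inr _)) => fromBlocks 0 (-1) 1 0

theorem cosetRepMatrix_symplectic (i : LagrangianIndex (ZMod p)) :
    (cosetRepMatrix p i)ᵀ * Jmat * cosetRepMatrix p i = Jmat := by
  rcases i with ⟨a, b, c⟩ | ⟨l, t⟩ | t | _ <;>
    ext (i | i) (j | j) <;> fin_cases i <;> fin_cases j <;>
    simp [cosetRepMatrix, Jmat, mul_apply, Fintype.sum_sum_type, Fin.sum_univ_two]

def cosetRep (i : LagrangianIndex (ZMod p)) : ↥Sp4 :=
  Sp4.ofMatrix (cosetRepMatrix p i) (cosetRepMatrix_symplectic p i)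

theorem firstColumnsMod_cosetRep [NeZero p] (i : LagrangianIndex (ZMod p)) :
    firstColumnsMod p (cosetRep p i) = lagrangianNormalForm i := by
  rcases i with ⟨a, b, c⟩ | ⟨l, t⟩ | t | _ <;>
    ext (i | i) j <;> fin_cases i <;> fin_cases j <;>
    simp [firstColumnsMod_apply, cosetRep, matOf_ofMatrix, cosetRepMatrix, lagrangianNormalForm]

end CosetRepresentatives

section Prime
variable (p : ℕ) [Fact p.Prime]

theorem firstColumnsMod_mulVec_injective (γ : ↥Sp4) :
    Function.Injective (firstColumnsMod p γ).mulVec := by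
  intro v w h
  simp only [firstColumnsMod, ← mulVec_mulVec] at h
  have := mulVec_injective_iff_isUnit.mpr (reduceMod p γ).isUnit h
  simp only [standardFrame, fromRows_mulVec, one_mulVec, zero_mulVec] at this
  exact congrArg (· ∘ Sum.inl) this

theorem cosetRep_mk_injective :
    Function.Injective fun i : LagrangianIndex (ZMod p) => (cosetRep p i : ↥Sp4 ⧸ Gamma0 p) := by
  intro i j hij
  obtain ⟨g, hg⟩ := (inv_mul_mem_Gamma0_iff p _ _).mp (QuotientGroup.eq.mp hij)
  rw [firstColumnsMod_cosetRep, firstColumnsMod_cosetRep] at hg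
  exact eq_of_lagrangianNormalForm_eq_mul hg

theorem cosetRep_mk_surjective :
    Function.Surjective fun i : LagrangianIndex (ZMod p) => (cosetRep p i : ↥Sp4 ⧸ Gamma0 p) := by
  intro q
  induction q using QuotientGroup.induction_on with | H γ =>
  obtain ⟨i, G, hG⟩ := exists_mul_eq_lagrangianNormalForm (firstColumnsMod_isotropic p γ)
    (firstColumnsMod_mulVec_injective p γ)
  refine ⟨i, (QuotientGroup.eq.mpr ((inv_mul_mem_Gamma0_iff p γ _).mpr ⟨G, ?_⟩)).symm⟩
  rw [firstColumnsMod_cosetRep, hG]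

end Prime

/-- `Γ₀(p)` has index `p³ + p² + p + 1` in `Sp₄(ℤ)`. -/
theorem gamma0_index (p : ℕ) (hp : p.Prime) :
    (Gamma0 p).index = p ^ 3 + p ^ 2 + p + 1 := by
  have : Fact p.Prime := ⟨hp⟩
  rw [Subgroup.index, ← Nat.card_congr (Equiv.ofBijective _
    ⟨cosetRep_mk_injective p, cosetRep_mk_surjective p⟩)]
  simp only [Nat.card_sum, Nat.card_prod, Nat.card_zmod, Nat.card_unique]
  ring
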